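/- If an infinite binary word z satisfies that both 0·z and 1·z belong to the shift orbit closure of the Fibonacci word, then z equals the Fibonacci word. -/

import Mathlib

/-- The Fibonacci morphism on letters: φ(0)=01, φ(1)=0 (0 = `false`, 1 = `true`). -/
def phi : Bool → List Bool
  | false => [false, true]
  | true  => [false]

/-- The Fibonacci morphism extended to words. -/
def phiW (w : List Bool) : List Bool := w.flatMap phi

/-- The finite word `u` is a prefix of the infinite word `x`. -/
def IsPrefixI (u : List Bool) (x : ℕ → Bool) : Prop :=
  ∀ i, i < u.length → u.getD i false = x i

/-- `f` is the Fibonacci word: every `φ^n(0)` is a prefix of `f`. -/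
def IsFibWord (f : ℕ → Bool) : Prop :=
  ∀ n, IsPrefixI (phiW^[n] [false]) f

/-- The finite word `u` is a factor of the infinite word `x`. -/
def IsFactorI (u : List Bool) (x : ℕ → Bool) : Prop :=
  ∃ k, ∀ i, i < u.length → u.getD i false = x (k + i)

/-- Prepend a letter to an infinite word. -/
def consI (a : Bool) (x : ℕ → Bool) : ℕ → Bool :=
  fun n => if n = 0 then a else x (n - 1)

/-- `x` belongs to the shift orbit closure of the infinite word `w`:
every finite factor of `x` is a factor of `w`. -/
def InOrbitClosure (x w : ℕ → Bool) : Prop :=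
  ∀ u : List Bool, IsFactorI u x → IsFactorI u w

/-!
In `φ(s)` every `1` ends a block `φ(0) = 01`, and every `00` begins with a block `φ(1) = 0`.
Hence if `w` is left special (both `0w` and `1w` are factors of `f`), its greedy
desubstitution `d` is again left special, strictly shorter, and `w` is a prefix of `φ(d) 0`.
By induction on the length, `d` and then `w` are prefixes of some `φⁿ(0)`, i.e. of `f`.
Applied to the prefixes of `z` this gives `z = f`.
-/

@[simp] theorem phiW_nil : phiW [] = [] := rfl

@[simp] theorem phiW_cons (a : Bool) (w : List Bool) : phiW (a :: w) = phi a ++ phiW w := by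
  simp [phiW]

@[simp] theorem phiW_append (u v : List Bool) : phiW (u ++ v) = phiW u ++ phiW v := by
  simp [phiW]

theorem phiW_ne_true_cons (s r : List Bool) : phiW s ≠ true :: r := by
  rcases s with _ | ⟨_ | _, _⟩ <;> simp [phi]

theorem phiW_eq_append_true_cons {s x r : List Bool} (h : phiW s = x ++ true :: r) :
    ∃ t, false :: t <:+: s ∧ r = phiW t := by
  induction s generalizing x with
  | nil => simp at h
  | cons a s ih =>
    rw [phiW_cons, List.append_eq_append_iff] at h
    rcases h with ⟨y, rfl, h⟩ | ⟨y, hx, hy⟩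
    · obtain ⟨t, ht, rfl⟩ := ih h
      exact ⟨t, List.infix_cons ht, rfl⟩
    · rcases y with _ | ⟨_ | _, y⟩
      · exact absurd hy.symm (phiW_ne_true_cons s r)
      · simp at hy
      · rcases a with _ | _ <;> rcases x with _ | ⟨_, _ | ⟨_, x⟩⟩ <;> simp [phi] at hx
        obtain ⟨rfl, rfl⟩ := hx
        exact ⟨s, List.infix_refl _, by simpa using hy⟩

theorem phiW_eq_append_false_cons {s x r : List Bool} (h : phiW s = x ++ false :: r) :
    ∃ t, t <:+: s ∧ false :: r = phiW t := by
  induction s generalizing x with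
  | nil => simp at h
  | cons a s ih =>
    rw [phiW_cons, List.append_eq_append_iff] at h
    rcases h with ⟨y, rfl, h⟩ | ⟨y, hx, hy⟩
    · obtain ⟨t, ht, h⟩ := ih h
      exact ⟨t, List.infix_cons ht, h⟩
    · rcases y with _ | ⟨_ | _, y⟩
      · exact ⟨s, List.infix_cons (List.infix_refl s), hy⟩
      · refine ⟨a :: s, List.infix_refl _, ?_⟩
        rcases a with _ | _ <;> rcases x with _ | ⟨_, _ | ⟨_, x⟩⟩ <;> simp [phi] at hx
        all_goals subst hx; simpa [phi] using hy
      · simp at hy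

theorem exists_of_true_cons_infix_phiW {w s : List Bool} (h : true :: w <:+: phiW s) :
    ∃ t, false :: t <:+: s ∧ w <+: phiW t := by
  obtain ⟨x, y, h⟩ := h
  obtain ⟨t, ht, hy⟩ := phiW_eq_append_true_cons (x := x) (r := w ++ y) (by rw [← h]; simp)
  exact ⟨t, ht, y, hy⟩

theorem exists_of_false_false_cons_infix_phiW {w s : List Bool}
    (h : false :: false :: w <:+: phiW s) : ∃ t, true :: t <:+: s ∧ false :: w <+: phiW t := by
  obtain ⟨x, y, h⟩ := h
  obtain ⟨t, ht, hy⟩ :=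
    phiW_eq_append_false_cons (x := x) (r := false :: w ++ y) (by rw [← h]; simp)
  rcases t with _ | ⟨_ | _, t⟩
  · simp at hy
  · simp [phi] at hy
  · exact ⟨t, ht, y, by simpa [phi] using hy⟩

/-- Greedy decoding of `phiW`; a trailing `false`, which could begin either block, is dropped. -/
def unphi : List Bool → List Bool
  | false :: true :: r => false :: unphi r
  | false :: t@(false :: _) => true :: unphi t
  | _ => []

theorem unphi_prefix {w s : List Bool} (h : w <+: phiW s) : unphi w <+: s := by
  induction w using unphi.induct generalizing s with
  | case1 r ih =>
    rcases s with _ | ⟨_ | _, s⟩ <;> simp [phi] at h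
    · simpa [unphi] using ih h
    · obtain ⟨u, hu⟩ := h
      exact absurd hu.symm (phiW_ne_true_cons _ _)
  | case2 t ih =>
    rcases s with _ | ⟨_ | _, s⟩ <;> simp [phi] at h
    simpa [unphi] using ih h
  | case3 x h1 h2 => rw [unphi.eq_3 x h1 h2]; exact List.nil_prefix

theorem prefix_phiW_unphi_append {w s : List Bool} (h : w <+: phiW s) :
    w <+: phiW (unphi w) ++ [false] := by
  induction w using unphi.induct generalizing s with
  | case1 r ih =>
    rcases s with _ | ⟨_ | _, s⟩ <;> simp [phi] at h
    · simpa [unphi, phi] using ih h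
    · obtain ⟨u, hu⟩ := h
      exact absurd hu.symm (phiW_ne_true_cons _ _)
  | case2 t ih =>
    rcases s with _ | ⟨_ | _, s⟩ <;> simp [phi] at h
    simpa [unphi, phi] using ih h
  | case3 x h1 h2 =>
    rw [unphi.eq_3 x h1 h2]
    rcases x with _ | ⟨_ | _, _ | ⟨_ | _, x⟩⟩
    · exact List.nil_prefix
    · exact List.prefix_rfl
    · exact absurd rfl (h2 _)
    · exact absurd rfl (h1 _)
    all_goals obtain ⟨u, hu⟩ := h; exact absurd hu.symm (phiW_ne_true_cons _ _)

theorem length_unphi_lt {w : List Bool} (h : w ≠ []) : (unphi w).length < w.length := by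
  induction w using unphi.induct with
  | case1 r ih =>
    rcases r with _ | ⟨a, r⟩
    · simp [unphi]
    · have := ih (by simp)
      simp only [unphi, List.length_cons] at this ⊢
      omega
  | case2 t ih => simpa [unphi] using ih (by simp)
  | case3 x h1 h2 => rw [unphi.eq_3 x h1 h2]; exact List.length_pos_iff.mpr h

def finFibWord (n : ℕ) : List Bool := phiW^[n] [false]

theorem finFibWord_succ (n : ℕ) : finFibWord (n + 1) = phiW (finFibWord n) :=
  Function.iterate_succ_apply' _ _ _

theorem finFibWord_add_two (n : ℕ) :
    finFibWord (n + 2) = finFibWord (n + 1) ++ finFibWord n := by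
  induction n with
  | zero => rfl
  | succ n ih =>
    rw [finFibWord_succ (n + 2), ih, phiW_append, ← finFibWord_succ, ← finFibWord_succ, ← ih]

theorem finFibWord_prefix_succ (n : ℕ) : finFibWord n <+: finFibWord (n + 1) := by
  cases n with
  | zero => exact ⟨[true], rfl⟩
  | succ n => exact ⟨_, (finFibWord_add_two n).symm⟩

theorem finFibWord_prefix_of_le {m n : ℕ} (h : m ≤ n) : finFibWord m <+: finFibWord n := by
  induction n, h using Nat.le_induction with
  | base => exact List.prefix_rfl
  | succ n _ ih => exact ih.trans (finFibWord_prefix_succ n)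

theorem lt_length_finFibWord : ∀ n, n < (finFibWord n).length
  | 0 => Nat.zero_lt_one
  | 1 => Nat.one_lt_two
  | n + 2 => by
    have := lt_length_finFibWord n
    have := lt_length_finFibWord (n + 1)
    rw [finFibWord_add_two, List.length_append]
    omega

theorem exists_prefix_phiW_append_false {d : List Bool} {n : ℕ} (h : d <+: finFibWord n) :
    ∃ m, phiW d ++ [false] <+: finFibWord m := by
  set k := max n d.length
  obtain ⟨t, ht⟩ := h.trans (finFibWord_prefix_of_le (le_max_left n d.length))
  obtain ⟨c, t, rfl⟩ : ∃ c t', t = c :: t' := by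
    refine List.exists_cons_of_ne_nil fun ht0 => ?_
    have := lt_length_finFibWord k
    rw [← ht, ht0, List.append_nil] at this
    exact absurd this (not_lt.2 (le_max_right n d.length))
  refine ⟨k + 1, ?_⟩
  rw [finFibWord_succ, ← ht, phiW_append, phiW_cons]
  cases c
  · exact ⟨true :: phiW t, by simp [phi]⟩
  · exact ⟨phiW t, by simp [phi]⟩

def IsFibFactor (u : List Bool) : Prop := ∃ n, u <:+: finFibWord n

theorem IsFibFactor.exists_infix_phiW {u : List Bool} (h : IsFibFactor u) :
    ∃ n, u <:+: phiW (finFibWord n) := by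
  obtain ⟨n, hn⟩ := h
  exact ⟨n, finFibWord_succ n ▸ hn.trans (finFibWord_prefix_succ n).isInfix⟩

def IsFibLeftSpecial (w : List Bool) : Prop := IsFibFactor (false :: w) ∧ IsFibFactor (true :: w)

theorem IsFibLeftSpecial.desubstitute {w : List Bool} (h : IsFibLeftSpecial w) :
    IsFibLeftSpecial (unphi w) ∧ w <+: phiW (unphi w) ++ [false] := by
  obtain ⟨N, hN⟩ := h.2.exists_infix_phiW
  obtain ⟨t, ht, hwt⟩ := exists_of_true_cons_infix_phiW hN
  refine ⟨⟨⟨N, (List.cons_prefix_cons.2 ⟨rfl, unphi_prefix hwt⟩).isInfix.trans ht⟩, ?_⟩,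
    prefix_phiW_unphi_append hwt⟩
  rcases w with _ | ⟨_ | _, v⟩
  · simpa [unphi] using h.2
  · obtain ⟨M, hM⟩ := h.1.exists_infix_phiW
    obtain ⟨t', ht', hwt'⟩ := exists_of_false_false_cons_infix_phiW hM
    exact ⟨M, (List.cons_prefix_cons.2 ⟨rfl, unphi_prefix hwt'⟩).isInfix.trans ht'⟩
  · obtain ⟨u, hu⟩ := hwt
    exact absurd hu.symm (phiW_ne_true_cons _ _)

theorem IsFibLeftSpecial.exists_prefix_finFibWord {w : List Bool} (h : IsFibLeftSpecial w) :
    ∃ n, w <+: finFibWord n := by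
  rcases eq_or_ne w [] with rfl | hw
  · exact ⟨0, List.nil_prefix⟩
  obtain ⟨h', hw'⟩ := h.desubstitute
  obtain ⟨n, hn⟩ := h'.exists_prefix_finFibWord
  obtain ⟨m, hm⟩ := exists_prefix_phiW_append_false hn
  exact ⟨m, hw'.trans hm⟩
termination_by w.length
decreasing_by exact length_unphi_lt hw

theorem IsFibWord.isPrefixI_of_prefix {f : ℕ → Bool} (hf : IsFibWord f) {u : List Bool} {n : ℕ}
    (h : u <+: finFibWord n) : IsPrefixI u f := by
  intro i hi
  have hn := hf n i (hi.trans_le h.length_le)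
  rwa [List.getD_eq_getElem _ _ hi, h.getElem hi, ← List.getD_eq_getElem _ false]

theorem IsFibWord.isFibFactor {f : ℕ → Bool} (hf : IsFibWord f) {u : List Bool}
    (hu : IsFactorI u f) : IsFibFactor u := by
  obtain ⟨k, hk⟩ := hu
  have hlen := lt_length_finFibWord (k + u.length)
  refine ⟨k + u.length, List.infix_iff_getElem?.2 ⟨k, by omega, fun i hi => ?_⟩⟩
  have hfi : (finFibWord (k + u.length)).getD (k + i) false = f (k + i) :=
    hf _ _ (show k + i < (finFibWord _).length by omega)
  rw [← hk i hi, List.getD_eq_getElem _ _ hi, List.getD_eq_getElem _ _ (by omega)] at hfi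
  rw [Nat.add_comm i k, List.getElem?_eq_getElem (by omega), hfi]

theorem isFactorI_cons_consI (a : Bool) (x : ℕ → Bool) (n : ℕ) :
    IsFactorI (a :: (List.range n).map x) (consI a x) :=
  ⟨0, fun i hi => by cases i <;> simp_all [consI]⟩

theorem fib_left_special (f z : ℕ → Bool) (hf : IsFibWord f)
    (h0 : InOrbitClosure (consI false z) f)
    (h1 : InOrbitClosure (consI true z) f) :
    z = f := by
  funext n
  have hz : IsFibLeftSpecial ((List.range (n + 1)).map z) :=
    ⟨hf.isFibFactor (h0 _ (isFactorI_cons_consI false z _)),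
      hf.isFibFactor (h1 _ (isFactorI_cons_consI true z _))⟩
  obtain ⟨N, hN⟩ := hz.exists_prefix_finFibWord
  simpa using hf.isPrefixI_of_prefix hN n (by simp)
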